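/- Claim (variance bound under covariance misspecification). Assume (A4) and that all weights satisfy w_{k,i} ∈ [0,1]. Then the covariance matrix of the quasi-MLE θ̃_k under the true model Y ~ N(f, Σ0), namely V_k = B_k⁻¹ Ψ W_k Σ0 W_k Ψᵀ B_k⁻¹, satisfies V_k ⪯ (1+δ) B_k⁻¹ in the Löwner partial order; equality holds when the weights are rectangular (0/1-valued) and δ = 0. -/

import Mathlib

open MeasureTheory ProbabilityTheory Matrix Real

noncomputable section

namespace SpatialAdapt

/-- The law `N(m, diag(s i ^ 2))` on `ℝ^n`: product of independent one-dimensional Gaussians. -/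
def gaussianVec (n : ℕ) (m s : Fin n → ℝ) : Measure (Fin n → ℝ) :=
  Measure.pi fun i => gaussianReal (m i) (Real.toNNReal (s i ^ 2))

/-- Löwner partial order on symmetric matrices: `A ⪯ B` iff `B - A` is positive semidefinite. -/
def LoewnerLE {ι : Type*} [Fintype ι] (A B : Matrix ι ι ℝ) : Prop :=
  (B - A).PosSemidef

/-- Diagonal covariance matrix `diag(s i ^ 2)`. -/
def covMat (n : ℕ) (s : Fin n → ℝ) : Matrix (Fin n) (Fin n) ℝ :=
  Matrix.diagonal fun i => s i ^ 2

/-- `W = Σ^{-1/2} 𝒲 Σ^{-1/2} = diag(w i / σ i ^ 2)`. -/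
def Wmat (n : ℕ) (σv : Fin n → ℝ) (w : Fin n → ℝ) : Matrix (Fin n) (Fin n) ℝ :=
  Matrix.diagonal fun i => w i / σv i ^ 2

/-- `B = Ψ W Ψᵀ`. -/
def Bmat (n p : ℕ) (σv : Fin n → ℝ) (Ψ : Matrix (Fin p) (Fin n) ℝ) (w : Fin n → ℝ) :
    Matrix (Fin p) (Fin p) ℝ :=
  Ψ * Wmat n σv w * Ψᵀ

/-- `D = B⁻¹ Ψ W`. -/
def Dmat (n p : ℕ) (σv : Fin n → ℝ) (Ψ : Matrix (Fin p) (Fin n) ℝ) (w : Fin n → ℝ) :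
    Matrix (Fin p) (Fin n) ℝ :=
  (Bmat n p σv Ψ w)⁻¹ * Ψ * Wmat n σv w

/-- The quasi-MLE `θ̃ = B⁻¹ Ψ W y`. -/
def thetaTilde (n p : ℕ) (σv : Fin n → ℝ) (Ψ : Matrix (Fin p) (Fin n) ℝ) (w : Fin n → ℝ)
    (y : Fin n → ℝ) : Fin p → ℝ :=
  (Dmat n p σv Ψ w).mulVec y

/-- Quadratic form `v ⬝ B v`. -/
def quadForm {p : ℕ} (B : Matrix (Fin p) (Fin p) ℝ) (v : Fin p → ℝ) : ℝ :=
  v ⬝ᵥ B.mulVec v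

/-- The test statistic `T_{lm} = (θ̃_l - θ̃_m)ᵀ B_l (θ̃_l - θ̃_m)`. -/
def Tstat (n p : ℕ) (σv : Fin n → ℝ) (Ψ : Matrix (Fin p) (Fin n) ℝ) (w : ℕ → Fin n → ℝ)
    (l m : ℕ) (y : Fin n → ℝ) : ℝ :=
  quadForm (Bmat n p σv Ψ (w l))
    (thetaTilde n p σv Ψ (w l) y - thetaTilde n p σv Ψ (w m) y)

/-- The adaptive index `k̂ = max {k ≤ K : T_{lm} ≤ z_l for all 1 ≤ l < m ≤ k}`. -/
def khat (n p K : ℕ) (σv : Fin n → ℝ) (Ψ : Matrix (Fin p) (Fin n) ℝ) (w : ℕ → Fin n → ℝ)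
    (z : ℕ → ℝ) (y : Fin n → ℝ) : ℕ :=
  sSup {k | k ≤ K ∧ ∀ l m, 1 ≤ l → l < m → m ≤ k → Tstat n p σv Ψ w l m y ≤ z l}

/-- The adaptive estimator `θ̂ = θ̃_{k̂}`. -/
def thetaHat (n p K : ℕ) (σv : Fin n → ℝ) (Ψ : Matrix (Fin p) (Fin n) ℝ) (w : ℕ → Fin n → ℝ)
    (z : ℕ → ℝ) (y : Fin n → ℝ) : Fin p → ℝ :=
  thetaTilde n p σv Ψ (w (khat n p K σv Ψ w z y)) y

/-- The last accepted estimator after `k` steps: `θ̂_k = θ̃_{min(k, k̂)}`. -/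
def thetaHatStep (n p K : ℕ) (σv : Fin n → ℝ) (Ψ : Matrix (Fin p) (Fin n) ℝ)
    (w : ℕ → Fin n → ℝ) (z : ℕ → ℝ) (k : ℕ) (y : Fin n → ℝ) : Fin p → ℝ :=
  thetaTilde n p σv Ψ (w (min k (khat n p K σv Ψ w z y))) y

/-- `C(p, r) = E|χ²_p|^r = 2^r Γ(r + p/2) / Γ(p/2)`. -/
def Cpr (p : ℕ) (r : ℝ) : ℝ :=
  2 ^ r * Real.Gamma (r + p / 2) / Real.Gamma (p / 2)

/-- `P(χ²_p ≥ t)`, the tail of the chi-squared distribution with `p` degrees of freedom. -/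
def chiSqTail (p : ℕ) (t : ℝ) : ℝ :=
  ((Measure.pi fun _ : Fin p => gaussianReal 0 1) {x | t ≤ ∑ i, x i ^ 2}).toReal

/-- The `pk × pk` joint covariance `𝔻_k (J_k ⊗ Σm) 𝔻_kᵀ`, whose `(l, m)` block
is `D_l Σm D_mᵀ` (blocks are indexed by `1, …, k`, i.e. by `Fin k` shifted by one). -/
def jointCov (n p : ℕ) (σv σm : Fin n → ℝ) (Ψ : Matrix (Fin p) (Fin n) ℝ)
    (w : ℕ → Fin n → ℝ) (k : ℕ) : Matrix (Fin k × Fin p) (Fin k × Fin p) ℝ :=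
  Matrix.of fun a b =>
    (Dmat n p σv Ψ (w (a.1 + 1)) * covMat n σm * (Dmat n p σv Ψ (w (b.1 + 1)))ᵀ) a.2 b.2

/-- The stacked bias vector `b(k) = (θ̄_1 - θ, …, θ̄_k - θ)`. -/
def biasVec (n p : ℕ) (σv : Fin n → ℝ) (Ψ : Matrix (Fin p) (Fin n) ℝ) (w : ℕ → Fin n → ℝ)
    (k : ℕ) (f : Fin n → ℝ) (θ : Fin p → ℝ) : Fin k × Fin p → ℝ :=
  fun a => (thetaTilde n p σv Ψ (w (a.1 + 1)) f - θ) a.2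

/-- The modeling bias `Δ(k) = b(k)ᵀ 𝚺_k⁻¹ b(k)`. -/
def DeltaK (n p : ℕ) (σv : Fin n → ℝ) (Ψ : Matrix (Fin p) (Fin n) ℝ) (w : ℕ → Fin n → ℝ)
    (k : ℕ) (f : Fin n → ℝ) (θ : Fin p → ℝ) : ℝ :=
  biasVec n p σv Ψ w k f θ ⬝ᵥ
    (jointCov n p σv σv Ψ w k)⁻¹.mulVec (biasVec n p σv Ψ w k f θ)

/-- The componentwise `k × k` covariance `𝚺_{k,j}` with entries `(D_l Σm D_mᵀ)_{jj}`. -/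
def jointCovComp (n p : ℕ) (σv σm : Fin n → ℝ) (Ψ : Matrix (Fin p) (Fin n) ℝ)
    (w : ℕ → Fin n → ℝ) (k : ℕ) (j : Fin p) : Matrix (Fin k) (Fin k) ℝ :=
  Matrix.of fun a b =>
    (Dmat n p σv Ψ (w (a.1 + 1)) * covMat n σm * (Dmat n p σv Ψ (w (b.1 + 1)))ᵀ) j j

/-- The componentwise bias vector `b_j(k)`. -/
def biasVecComp (n p : ℕ) (σv : Fin n → ℝ) (Ψ : Matrix (Fin p) (Fin n) ℝ)
    (w : ℕ → Fin n → ℝ) (k : ℕ) (f : Fin n → ℝ) (θ : Fin p → ℝ) (j : Fin p) : Fin k → ℝ :=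
  fun a => (thetaTilde n p σv Ψ (w (a.1 + 1)) f - θ) j

/-- The componentwise modeling bias `Δ_j(k) = b_j(k)ᵀ 𝚺_{k,j}⁻¹ b_j(k)`. -/
def DeltaComp (n p : ℕ) (σv : Fin n → ℝ) (Ψ : Matrix (Fin p) (Fin n) ℝ)
    (w : ℕ → Fin n → ℝ) (k : ℕ) (f : Fin n → ℝ) (θ : Fin p → ℝ) (j : Fin p) : ℝ :=
  biasVecComp n p σv Ψ w k f θ j ⬝ᵥ
    (jointCovComp n p σv σv Ψ w k j)⁻¹.mulVec (biasVecComp n p σv Ψ w k f θ j)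

open scoped Classical in
/-- `φ(δ)`: equal to `1` for homogeneous errors, `2(1+δ)/(1-δ)² - 1` otherwise. -/
def varphi (n : ℕ) (σ0 σv : Fin n → ℝ) (δ : ℝ) : ℝ :=
  if ∃ c0 c : ℝ, (∀ i, σ0 i = c0) ∧ (∀ i, σv i = c) then 1
  else 2 * (1 + δ) / (1 - δ) ^ 2 - 1

/-- `σ̄²_max(k) = max_{1 ≤ l ≤ k} σ²_max(l)`. -/
def sbarMax (σmax : ℕ → ℝ) (k : ℕ) : ℝ :=
  sSup (σmax '' Set.Icc 1 k)

/-- Euclidean norm on `ℝ^p`. -/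
def enorm {p : ℕ} (v : Fin p → ℝ) : ℝ :=
  Real.sqrt (∑ i, v i ^ 2)

/-! With `G = B⁻¹ Ψ` one has both `V = G (W Σ₀ W) Gᵀ` and `B⁻¹ = G W Gᵀ`, and conjugation by `G`
preserves the Löwner order. So it suffices to compare the diagonal matrices `W Σ₀ W` and
`(1 + δ) W` entrywise: `w² σ₀² / σ⁴ ≤ (1 + δ) w² / σ² ≤ (1 + δ) w / σ²`, using `σ₀² ≤ (1 + δ) σ²`
and `w² ≤ w`. For 0/1 weights and `σ₀² = σ²` both steps are equalities. -/

theorem LoewnerLE.mul_mul_transpose {ι κ : Type*} [Fintype ι] [Fintype κ]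
    {A B : Matrix ι ι ℝ} (h : LoewnerLE A B) (G : Matrix κ ι ℝ) :
    LoewnerLE (G * A * Gᵀ) (G * B * Gᵀ) := by
  unfold LoewnerLE at h ⊢
  rw [← Matrix.sub_mul, ← Matrix.mul_sub]
  simpa using h.mul_mul_conjTranspose_same G

theorem loewnerLE_diagonal {ι : Type*} [Fintype ι] [DecidableEq ι] {d e : ι → ℝ}
    (h : ∀ i, d i ≤ e i) : LoewnerLE (diagonal d) (diagonal e) := by
  rw [LoewnerLE, diagonal_sub, posSemidef_diagonal_iff]
  exact fun i => sub_nonneg.mpr (h i)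

theorem inv_eq_mul_mul_transpose {ι κ : Type*} [Fintype ι] [Fintype κ] [DecidableEq κ]
    (Ψ : Matrix κ ι ℝ) {W : Matrix ι ι ℝ} (hW : Wᵀ = W) (hB : IsUnit (Ψ * W * Ψᵀ).det) :
    (Ψ * W * Ψᵀ)⁻¹ = (Ψ * W * Ψᵀ)⁻¹ * Ψ * W * ((Ψ * W * Ψᵀ)⁻¹ * Ψ)ᵀ := by
  have hBsymm : (Ψ * W * Ψᵀ)ᵀ = Ψ * W * Ψᵀ := by
    simp only [transpose_mul, transpose_transpose, hW, Matrix.mul_assoc]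
  rw [transpose_mul, transpose_nonsing_inv, hBsymm]
  calc (Ψ * W * Ψᵀ)⁻¹ = (Ψ * W * Ψᵀ)⁻¹ * (Ψ * W * Ψᵀ) * (Ψ * W * Ψᵀ)⁻¹ := by
        rw [nonsing_inv_mul _ hB, Matrix.one_mul]
    _ = _ := by simp only [Matrix.mul_assoc]

theorem transpose_Wmat (n : ℕ) (σv w : Fin n → ℝ) : (Wmat n σv w)ᵀ = Wmat n σv w :=
  diagonal_transpose _

theorem Dmat_mul_mul_transpose (n p : ℕ) (σv : Fin n → ℝ) (Ψ : Matrix (Fin p) (Fin n) ℝ)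
    (w : Fin n → ℝ) (M : Matrix (Fin n) (Fin n) ℝ) :
    Dmat n p σv Ψ w * M * (Dmat n p σv Ψ w)ᵀ =
      (Bmat n p σv Ψ w)⁻¹ * Ψ * (Wmat n σv w * M * Wmat n σv w) *
        ((Bmat n p σv Ψ w)⁻¹ * Ψ)ᵀ := by
  rw [Dmat, transpose_mul _ (Wmat n σv w), transpose_Wmat]
  simp only [Matrix.mul_assoc]

theorem Wmat_mul_covMat_mul_Wmat (n : ℕ) (σv w s : Fin n → ℝ) :
    Wmat n σv w * covMat n s * Wmat n σv w =
      diagonal fun i => w i / σv i ^ 2 * s i ^ 2 * (w i / σv i ^ 2) := by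
  simp only [Wmat, covMat, diagonal_mul_diagonal]

theorem div_mul_mul_div_le {w s s₀ c : ℝ} (hw₀ : 0 ≤ w) (hw₁ : w ≤ 1) (hs₀ : 0 ≤ s₀)
    (hs₀c : s₀ ≤ c * s) : w / s * s₀ * (w / s) ≤ c * (w / s) := by
  rcases eq_or_ne s 0 with rfl | hs
  · simp
  have hcs : 0 ≤ c / s := by
    rw [show c / s = c * s / (s * s) by field_simp]
    exact div_nonneg (hs₀.trans hs₀c) (mul_self_nonneg s)
  calc w / s * s₀ * (w / s) = (w / s) ^ 2 * s₀ := by ring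
    _ ≤ (w / s) ^ 2 * (c * s) := by gcongr
    _ = c / s * w ^ 2 := by field_simp
    _ ≤ c / s * w := by gcongr; nlinarith
    _ = c * (w / s) := by ring

theorem div_mul_mul_div_eq {w s : ℝ} (hw : w = 0 ∨ w = 1) : w / s * s * (w / s) = w / s := by
  rcases eq_or_ne s 0 with rfl | hs
  · simp
  · rcases hw with rfl | rfl
    · simp
    · field_simp

theorem variance_bound_misspecification_general
    (n p : ℕ) (σv σ0 : Fin n → ℝ) (Ψ : Matrix (Fin p) (Fin n) ℝ)
    (wk : Fin n → ℝ) (hw : ∀ i, wk i ∈ Set.Icc (0 : ℝ) 1)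
    (hB : (Bmat n p σv Ψ wk).PosDef) (δ : ℝ)
    (hA4 : ∀ i, (1 - δ) * σv i ^ 2 ≤ σ0 i ^ 2 ∧ σ0 i ^ 2 ≤ (1 + δ) * σv i ^ 2) :
    LoewnerLE (Dmat n p σv Ψ wk * covMat n σ0 * (Dmat n p σv Ψ wk)ᵀ)
      ((1 + δ) • (Bmat n p σv Ψ wk)⁻¹) ∧
    ((∀ i, wk i = 0 ∨ wk i = 1) → (∀ i, σ0 i ^ 2 = σv i ^ 2) →
      Dmat n p σv Ψ wk * covMat n σ0 * (Dmat n p σv Ψ wk)ᵀ =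
        (Bmat n p σv Ψ wk)⁻¹) := by
  rw [Dmat_mul_mul_transpose, Wmat_mul_covMat_mul_Wmat]
  set G := (Bmat n p σv Ψ wk)⁻¹ * Ψ
  have hinv : (Bmat n p σv Ψ wk)⁻¹ = G * Wmat n σv wk * Gᵀ :=
    inv_eq_mul_mul_transpose Ψ (transpose_Wmat n σv wk) hB.det_pos.ne'.isUnit
  rw [hinv]
  constructor
  · rw [← Matrix.smul_mul, ← Matrix.mul_smul, Wmat, ← diagonal_smul]
    exact (loewnerLE_diagonal fun i =>
      div_mul_mul_div_le (hw i).1 (hw i).2 (sq_nonneg (σ0 i)) (hA4 i).2).mul_mul_transpose G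
  · intro hrect hσ
    congr 3
    funext i
    rw [hσ i]
    exact div_mul_mul_div_eq (hrect i)

/-- **Variance bound under covariance misspecification.** Under (A4) and weights in `[0,1]`,
the covariance `V_k = B_k⁻¹ Ψ W_k Σ₀ W_k Ψᵀ B_k⁻¹` of the quasi-MLE satisfies
`V_k ⪯ (1+δ) B_k⁻¹`; equality holds for rectangular (0/1) weights when `δ = 0`
(i.e. `Σ₀ = Σ`). -/
theorem variance_bound_misspecification
    (n p : ℕ) (hpn : p < n)
    (σv σ0 : Fin n → ℝ) (hσ : ∀ i, 0 < σv i) (hσ0 : ∀ i, 0 < σ0 i)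
    (Ψ : Matrix (Fin p) (Fin n) ℝ) (hA1 : Ψ.rank = p)
    (wk : Fin n → ℝ) (hw : ∀ i, wk i ∈ Set.Icc (0 : ℝ) 1)
    (hB : (Bmat n p σv Ψ wk).PosDef)
    (δ : ℝ) (hδ0 : 0 ≤ δ) (hδ1 : δ < 1)
    (hA4 : ∀ i, (1 - δ) * σv i ^ 2 ≤ σ0 i ^ 2 ∧ σ0 i ^ 2 ≤ (1 + δ) * σv i ^ 2) :
    LoewnerLE (Dmat n p σv Ψ wk * covMat n σ0 * (Dmat n p σv Ψ wk)ᵀ)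
      ((1 + δ) • (Bmat n p σv Ψ wk)⁻¹) ∧
    ((∀ i, wk i = 0 ∨ wk i = 1) → (∀ i, σ0 i ^ 2 = σv i ^ 2) →
      Dmat n p σv Ψ wk * covMat n σ0 * (Dmat n p σv Ψ wk)ᵀ =
        (Bmat n p σv Ψ wk)⁻¹) :=
  variance_bound_misspecification_general n p σv σ0 Ψ wk hw hB δ hA4

end SpatialAdapt
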